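/- Consider the constraint functions g₁(x) := x₁, g₂(x) := x₁ + x₂x₁² + x₂³/3, g₃(x) := 2x₁ + x₂x₁² + x₂³/3 on ℝ². Then: (i) at x* = (0,0) the rank of {∇g₁(x*), ∇g₂(x*), ∇g₃(x*)} is 1, and at every x ∈ ℝ² the rank of {∇g₁(x), ∇g₂(x), ∇g₃(x)} is at most 2; (ii) for every x ≠ (0,0), every two-element subset of {∇g₁(x), ∇g₂(x), ∇g₃(x)} is linearly independent (has rank 2); in particular, for x ≠ (0,0) the three gradients cannot be separated into a subset of rank 1 and a complementary subset of rank equal to the rank at x*. This disproves Lemma 3.4 of Lu, Song and Zhang (2017). -/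

import Mathlib

open scoped BigOperators

attribute [local instance] Classical.propDecidable

noncomputable section

/-- The gradient vector of `φ` at `x` (the vector of partial derivatives). -/
def gradVec {n : ℕ} (φ : (Fin n → ℝ) → ℝ) (x : Fin n → ℝ) : Fin n → ℝ :=
  fun k => fderiv ℝ φ x (Pi.single k 1)

/-- The rank of a family of vectors: the dimension of its linear span. -/
def famRank {ι : Type*} {n : ℕ} (v : ι → (Fin n → ℝ)) : ℕ :=
  Module.finrank ℝ (Submodule.span ℝ (Set.range v))

/-- Constraints of the counter-example to Lemma 3.4 of Lu–Song–Zhang. -/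
def g14 : Fin 3 → (Fin 2 → ℝ) → ℝ :=
  ![fun x => x 0,
    fun x => x 0 + x 1 * (x 0) ^ 2 + (x 1) ^ 3 / 3,
    fun x => 2 * x 0 + x 1 * (x 0) ^ 2 + (x 1) ^ 3 / 3]

/-!
Each constraint has the form `gᵢ = aᵢ x₁ + bᵢ h` with `h = x₂ x₁² + x₂³ / 3`, and
`∇h = (2 x₁ x₂, x₁² + x₂²)`. Hence `det (∇gᵢ, ∇gⱼ) = (x₁² + x₂²) (aᵢ bⱼ - aⱼ bᵢ)`, and the
coefficient minors are `±1`: off the origin any two gradients are independent, while at the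
origin every gradient is a multiple of `e₁`. A side of rank one of a splitting of the three
gradients therefore holds at most one of them, and so does the complementary side, which must
also have rank one; but three gradients do not fit into two such sides.
-/

section FamRank

variable {ι : Type*} {n : ℕ}

lemma famRank_le (v : ι → Fin n → ℝ) : famRank v ≤ n :=
  (Submodule.finrank_le _).trans_eq (Module.finrank_fin_fun ℝ)

lemma famRank_eq_one {v : ι → Fin n → ℝ} {u : Fin n → ℝ} (hv : ∀ i, v i ∈ ℝ ∙ u)
    {i₀ : ι} (hi₀ : v i₀ ≠ 0) : famRank v = 1 := by
  have hu : u ≠ 0 := by rintro rfl; simp_all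
  refine le_antisymm ?_ ?_
  · calc famRank v ≤ Module.finrank ℝ (ℝ ∙ u) :=
          Submodule.finrank_mono (Submodule.span_le.2 (Set.range_subset_iff.2 hv))
      _ = 1 := finrank_span_singleton hu
  · calc 1 = Module.finrank ℝ (ℝ ∙ v i₀) := (finrank_span_singleton hi₀).symm
      _ ≤ famRank v := Submodule.finrank_mono
          (Submodule.span_mono (Set.singleton_subset_iff.2 (Set.mem_range_self i₀)))

lemma two_le_famRank {v : ι → Fin n → ℝ} {i j : ι} (h : LinearIndependent ℝ ![v i, v j]) :
    2 ≤ famRank v := by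
  calc 2 = Module.finrank ℝ (Submodule.span ℝ (Set.range ![v i, v j])) := by
        rw [finrank_span_eq_card h, Fintype.card_fin]
    _ ≤ famRank v := Submodule.finrank_mono <| Submodule.span_mono <| by
        simp [Matrix.range_cons, Set.insert_subset_iff]

lemma subsingleton_of_famRank_lt_two {v : ι → Fin n → ℝ}
    (hv : ∀ i j, i ≠ j → LinearIndependent ℝ ![v i, v j]) {S : Set ι}
    (hS : famRank (fun j : S => v j) < 2) : S.Subsingleton := by
  intro i hi j hj
  by_contra hij
  have := two_le_famRank (v := fun j : S => v j) (i := ⟨i, hi⟩) (j := ⟨j, hj⟩) (hv i j hij)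
  omega

end FamRank

lemma linearIndependent_pair_of_det_ne_zero {v w : Fin 2 → ℝ} (h : v 0 * w 1 - v 1 * w 0 ≠ 0) :
    LinearIndependent ℝ ![v, w] := by
  change LinearIndependent ℝ (Matrix.of ![v, w]).row
  rw [Matrix.linearIndependent_rows_iff_isUnit, Matrix.isUnit_iff_isUnit_det, Matrix.det_fin_two]
  simpa using h

lemma not_subsingleton_and_compl {α : Type*} [Finite α] (hα : 2 < Nat.card α) (s : Set α) :
    ¬ (s.Subsingleton ∧ sᶜ.Subsingleton) := by
  rintro ⟨hs, hsc⟩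
  have := Set.ncard_add_ncard_compl s
  have := Set.ncard_le_one_iff_subsingleton.2 hs
  have := Set.ncard_le_one_iff_subsingleton.2 hsc
  omega

lemma gradVec_linear_add_cubic (a b : ℝ) (x : Fin 2 → ℝ) :
    gradVec (fun y => a * y 0 + b * (y 1 * y 0 ^ 2 + y 1 ^ 3 / 3)) x =
      ![a + 2 * b * x 0 * x 1, b * (x 0 ^ 2 + x 1 ^ 2)] := by
  have h0 := hasFDerivAt_apply (𝕜 := ℝ) (0 : Fin 2) x
  have h1 := hasFDerivAt_apply (𝕜 := ℝ) (1 : Fin 2) x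
  have h : HasFDerivAt (fun y : Fin 2 → ℝ => a * y 0 + b * (y 1 * y 0 ^ 2 + y 1 ^ 3 / 3)) _ x :=
    (h0.const_mul a).add (((h1.mul (h0.pow 2)).add ((h1.pow 3).mul_const (3⁻¹ : ℝ))).const_mul b)
  funext k
  rw [gradVec, h.fderiv]
  fin_cases k <;>
    simp only [Fin.zero_eta, Fin.mk_one, add_apply, smul_apply, ContinuousLinearMap.proj_apply,
      Pi.single_eq_same, Pi.single_eq_of_ne, ne_eq, zero_ne_one, one_ne_zero, not_false_eq_true,
      smul_eq_mul, nsmul_eq_mul, Matrix.cons_val_zero, Matrix.cons_val_one] <;> ring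

def g14LinearCoeff : Fin 3 → ℝ := ![1, 1, 2]

def g14CubicCoeff : Fin 3 → ℝ := ![0, 1, 1]

lemma g14_eq (i : Fin 3) :
    g14 i = fun y => g14LinearCoeff i * y 0 + g14CubicCoeff i * (y 1 * y 0 ^ 2 + y 1 ^ 3 / 3) := by
  funext y
  fin_cases i <;> simp [g14, g14LinearCoeff, g14CubicCoeff, add_assoc]

lemma gradVec_g14 (i : Fin 3) (x : Fin 2 → ℝ) :
    gradVec (g14 i) x = ![g14LinearCoeff i + 2 * g14CubicCoeff i * x 0 * x 1,
      g14CubicCoeff i * (x 0 ^ 2 + x 1 ^ 2)] := by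
  rw [g14_eq, gradVec_linear_add_cubic]

lemma g14Coeff_det_ne_zero {i j : Fin 3} (hij : i ≠ j) :
    g14LinearCoeff i * g14CubicCoeff j - g14LinearCoeff j * g14CubicCoeff i ≠ 0 := by
  revert hij
  fin_cases i <;> fin_cases j <;> norm_num [g14LinearCoeff, g14CubicCoeff]

lemma famRank_gradVec_g14_zero : famRank (fun i => gradVec (g14 i) (0 : Fin 2 → ℝ)) = 1 := by
  refine famRank_eq_one (u := ![1, 0]) (fun i => ?_) (i₀ := 0) ?_
  · refine Submodule.mem_span_singleton.2 ⟨g14LinearCoeff i, ?_⟩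
    ext k
    fin_cases k <;> simp [gradVec_g14]
  · simp [gradVec_g14, g14LinearCoeff]

lemma linearIndependent_gradVec_g14 {x : Fin 2 → ℝ} (hx : x ≠ 0) {i j : Fin 3} (hij : i ≠ j) :
    LinearIndependent ℝ ![gradVec (g14 i) x, gradVec (g14 j) x] := by
  have hr : x 0 ^ 2 + x 1 ^ 2 ≠ 0 := by
    contrapose! hx
    have h0 : x 0 = 0 := by nlinarith [sq_nonneg (x 0), sq_nonneg (x 1)]
    have h1 : x 1 = 0 := by nlinarith [sq_nonneg (x 0), sq_nonneg (x 1)]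
    ext k
    fin_cases k
    exacts [h0, h1]
  apply linearIndependent_pair_of_det_ne_zero
  simp only [gradVec_g14, Matrix.cons_val_zero, Matrix.cons_val_one]
  convert mul_ne_zero hr (g14Coeff_det_ne_zero hij) using 1
  ring

/-- the gradients of `g14` have rank 1 at the origin and rank at most 2
everywhere; away from the origin every two of the three gradients are linearly independent,
so the gradients cannot be split into a subset of rank 1 and a complementary subset whose
rank equals the rank at the origin. -/
theorem stmt14 :
    (famRank (fun i : Fin 3 => gradVec (g14 i) (0 : Fin 2 → ℝ)) = 1 ∧
      ∀ x : Fin 2 → ℝ, famRank (fun i : Fin 3 => gradVec (g14 i) x) ≤ 2) ∧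
    (∀ x : Fin 2 → ℝ, x ≠ 0 → ∀ i j : Fin 3, i ≠ j →
      LinearIndependent ℝ ![gradVec (g14 i) x, gradVec (g14 j) x]) ∧
    (∀ x : Fin 2 → ℝ, x ≠ 0 → ¬ ∃ E : Set (Fin 3),
      famRank (fun j : E => gradVec (g14 j.1) x) = 1 ∧
      famRank (fun j : ↥(Eᶜ) => gradVec (g14 j.1) x) =
        famRank (fun i : Fin 3 => gradVec (g14 i) (0 : Fin 2 → ℝ))) := by
  refine ⟨⟨famRank_gradVec_g14_zero, fun x => famRank_le _⟩,
    fun x hx i j => linearIndependent_gradVec_g14 hx, ?_⟩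
  rintro x hx ⟨E, hE, hEc⟩
  rw [famRank_gradVec_g14_zero] at hEc
  have hpair := fun i j => linearIndependent_gradVec_g14 (i := i) (j := j) hx
  exact not_subsingleton_and_compl (by simp) E
    ⟨subsingleton_of_famRank_lt_two hpair (by omega), subsingleton_of_famRank_lt_two hpair (by omega)⟩
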